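/- arXiv:2007.07746 — 6 statements merged into one kernel-verified Lean document; each statement's English description precedes it below -/
import Mathlib

section
/- Let F be a field of characteristic 2, let g be the 2-dimensional Lie algebra over F with basis e₋₁, e₀ and bracket [e₋₁, e₀] = e₋₁. Define Δ: g → g by Δ(k₋₁e₋₁ + k₀e₀) = k₀e₋₁ if k₋₁ ≠ 0, and Δ(k₋₁e₋₁ + k₀e₀) = 0 if k₋₁ = 0. Then Δ is a 2-local derivation on g. -/
open scoped Classical

/-!
The derivations are `α D₋₁ + β D₀ : k₋₁ e₋₁ + k₀ e₀ ↦ (α k₋₁ + β k₀) e₋₁`, and `Δ` multiplies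
`e₋₁` by `if k₋₁ ≠ 0 then k₀ else 0`, which agrees with some linear form `α k₋₁ + β k₀` on any
two points: use `D₀` if neither point has `k₋₁ = 0` and `0` if both do. If only `x` has
`k₋₁ = 0`, use `D₀` when also `k₀(x) = 0`, and `(k₀(y) / k₋₁(y)) D₋₁` otherwise.
-/

namespace Module.Basis

variable {R M : Type*} [CommRing R] [AddCommGroup M] [Module R M]

theorem repr_zero_smul_add_repr_one_smul (b : Basis (Fin 2) R M) (x : M) :
    b.repr x 0 • b 0 + b.repr x 1 • b 1 = x := by
  simpa only [Fin.sum_univ_two] using b.sum_repr x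

end Module.Basis

section LieAlgebra

variable {R L : Type*} [CommRing R] [LieRing L] [LieAlgebra R L]
  (b : Module.Basis (Fin 2) R L) (hb : ⁅b 0, b 1⁆ = b 0)

noncomputable def basisDerivation (α β : R) : LieDerivation R L L where
  toLinearMap := (α • b.coord 0 + β • b.coord 1).smulRight (b 0)
  leibniz' x y := by
    have hb' : ⁅b 1, b 0⁆ = -b 0 := by rw [← lie_skew, hb]
    rw [← b.repr_zero_smul_add_repr_one_smul x, ← b.repr_zero_smul_add_repr_one_smul y]
    simp [hb, hb']
    module

theorem basisDerivation_apply (α β : R) (x : L) :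
    basisDerivation b hb α β x = (α * b.repr x 0 + β * b.repr x 1) • b 0 :=
  rfl

end LieAlgebra

section Field

variable {F : Type*} [Field F]

theorem exists_ite_eq_of_fst_eq_zero {p : F × F} (hp : p.1 = 0) (q : F × F) :
    ∃ α β : F, (if p.1 ≠ 0 then p.2 else 0) = α * p.1 + β * p.2 ∧
      (if q.1 ≠ 0 then q.2 else 0) = α * q.1 + β * q.2 := by
  by_cases hq : q.1 = 0
  · exact ⟨0, 0, by simp [hp], by simp [hq]⟩
  by_cases hp' : p.2 = 0
  · exact ⟨0, 1, by simp [hp, hp'], by simp [hq]⟩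
  · exact ⟨q.2 / q.1, 0, by simp [hp], by simp [hq]⟩

theorem exists_ite_eq_pair (p q : F × F) :
    ∃ α β : F, (if p.1 ≠ 0 then p.2 else 0) = α * p.1 + β * p.2 ∧
      (if q.1 ≠ 0 then q.2 else 0) = α * q.1 + β * q.2 := by
  by_cases hp : p.1 = 0
  · exact exists_ite_eq_of_fst_eq_zero hp q
  by_cases hq : q.1 = 0
  · obtain ⟨α, β, h⟩ := exists_ite_eq_of_fst_eq_zero hq p
    exact ⟨α, β, h.symm⟩
  · exact ⟨0, 1, by simp [hp], by simp [hq]⟩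

end Field

theorem witt1_char2_twoLocalDerivation_general (F : Type*) [Field F]
    (L : Type*) [LieRing L] [LieAlgebra F L]
    (b : Module.Basis (Fin 2) F L) (hb : ⁅b 0, b 1⁆ = b 0)
    (Δ : L → L)
    (hΔ : ∀ k₁ k₀ : F, Δ (k₁ • b 0 + k₀ • b 1) = if k₁ ≠ 0 then k₀ • b 0 else 0) :
    ∀ x y : L, ∃ D : LieDerivation F L L, Δ x = D x ∧ Δ y = D y := by
  have hΔ' (x : L) : Δ x = (if b.repr x 0 ≠ 0 then b.repr x 1 else 0) • b 0 := by
    conv_lhs => rw [← b.repr_zero_smul_add_repr_one_smul x]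
    rw [hΔ, ite_smul, zero_smul]
  intro x y
  obtain ⟨α, β, hx, hy⟩ :=
    exists_ite_eq_pair (b.repr x 0, b.repr x 1) (b.repr y 0, b.repr y 1)
  exact ⟨basisDerivation b hb α β, by rw [hΔ', basisDerivation_apply, hx],
    by rw [hΔ', basisDerivation_apply, hy]⟩

/-- Over a field of characteristic `2`, on the 2-dimensional Lie algebra with
basis `e₋₁ = b 0`, `e₀ = b 1` and `[e₋₁, e₀] = e₋₁`, the map
`Δ (k₋₁ e₋₁ + k₀ e₀) = k₀ e₋₁` if `k₋₁ ≠ 0` and `= 0` if `k₋₁ = 0`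
is a 2-local derivation. -/
theorem witt1_char2_twoLocalDerivation (F : Type*) [Field F] [CharP F 2]
    (L : Type*) [LieRing L] [LieAlgebra F L]
    (b : Module.Basis (Fin 2) F L) (hb : ⁅b 0, b 1⁆ = b 0)
    (Δ : L → L)
    (hΔ : ∀ k₁ k₀ : F, Δ (k₁ • b 0 + k₀ • b 1) = if k₁ ≠ 0 then k₀ • b 0 else 0) :
    ∀ x y : L, ∃ D : LieDerivation F L L, Δ x = D x ∧ Δ y = D y :=
  witt1_char2_twoLocalDerivation_general F L b hb Δ hΔ
end

section
/- Let F be a field of prime characteristic p, and A_n = F[x₁,...,x_n]/(x₁^p,...,x_n^p) the truncated polynomial algebra. For 1 ≤ i ≤ n define the derivation 𝒟_i = D_i + Σ_{j=i}^{n-1} (Π_{k=i}^{j} x_k^{p-1}) D_{j+1} of A_n, where D_i is the partial derivative with respect to x_i. If p = 2 then 𝒟_i² = 𝒟_{i+1} as derivations of A_n, for 1 ≤ i ≤ n−1, and 𝒟_n² = 0. -/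
open MvPolynomial

set_option synthInstance.maxHeartbeats 400000
set_option maxHeartbeats 1000000

noncomputable section

def truncIdeal (F : Type*) [Field F] (p n : ℕ) : Ideal (MvPolynomial (Fin n) F) :=
  Ideal.span (Set.range fun i => (X i : MvPolynomial (Fin n) F) ^ p)

abbrev TP (F : Type*) [Field F] (p n : ℕ) :=
  MvPolynomial (Fin n) F ⧸ truncIdeal F p n

abbrev Wn (F : Type*) [Field F] (p n : ℕ) := Derivation F (TP F p n) (TP F p n)

def xv (F : Type*) [Field F] (p n : ℕ) (i : Fin n) : TP F p n :=
  Ideal.Quotient.mk _ (X i)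

def xm (F : Type*) [Field F] (p n : ℕ) (α : Fin n → ℕ) : TP F p n :=
  Ideal.Quotient.mk _ (∏ j, X j ^ α j)

/-- `D` is the family of coordinate partial derivatives `D₁, …, D_n` of `A_n`. -/
def IsCoordDer (F : Type*) [Field F] (p n : ℕ) (D : Fin n → Wn F p n) : Prop :=
  ∀ i j : Fin n, D i (xv F p n j) = if i = j then 1 else 0

def scrD (F : Type*) [Field F] (p n : ℕ) (D : Fin n → Wn F p n) (i : Fin n) :
    Wn F p n :=
  ∑ j : Fin n, if i ≤ j then
    (∏ k : Fin n, if i ≤ k ∧ k < j then xv F p n k ^ (p - 1) else 1) • D j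
  else 0

def gradeW (F : Type*) [Field F] (p n : ℕ) (D : Fin n → Wn F p n) (m : ℕ) :
    Submodule F (Wn F p n) :=
  Submodule.span F {w | ∃ (α : Fin n → ℕ) (j : Fin n),
    (∀ l, α l ≤ p - 1) ∧ (∑ l, α l) = m ∧ w = xm F p n α • D j}

def gradeWZ (F : Type*) [Field F] (p n : ℕ) (D : Fin n → Wn F p n) (k : ℤ) :
    Submodule F (Wn F p n) :=
  Submodule.span F {w | ∃ (α : Fin n → ℕ) (j : Fin n),
    (∀ l, α l ≤ p - 1) ∧ ((∑ l, α l : ℕ) : ℤ) = k + 1 ∧ w = xm F p n α • D j}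

def IsRegularVec (F : Type*) [Field F] (p n : ℕ) (lam : Fin n → F) : Prop :=
  ∀ μ : Fin n → ZMod p, (∑ i, ((μ i).val : F) * lam i) = 0 → μ = 0

end

/-!
In characteristic 2 the square of a derivation is again a derivation, so `𝒟ᵢ²` and `𝒟ᵢ₊₁` are
determined by their values on the generators `x_j`. For `j ≥ i` one has
`𝒟ᵢ x_j = xᵢ x_{i+1} ⋯ x_{j-1}`, and applying `𝒟ᵢ` once more only removes the factor `xᵢ`: every
other term of the Leibniz expansion carries `xᵢ² = 0`. This leaves `x_{i+1} ⋯ x_{j-1} = 𝒟ᵢ₊₁ x_j`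
for `j > i` and `0` otherwise; for `i = n` no `j > i` exists.
-/

namespace Derivation

variable {R A M : Type*} [CommSemiring R] [CommRing A] [Algebra R A]
  [AddCommGroup M] [Module A M] [Module R M]

theorem finset_sum_apply {ι : Type*} (s : Finset ι) (d : ι → Derivation R A M) (a : A) :
    (∑ j ∈ s, d j) a = ∑ j ∈ s, d j a := by
  rw [← coeFnAddMonoidHom_apply, map_sum, Finset.sum_apply]
  rfl

theorem smul_map_prod_eq_zero {ι : Type*} (d : Derivation R A M) (x : A) (s : Finset ι)
    (f : ι → A) (h : ∀ k ∈ s, x • d (f k) = 0) : x • d (∏ k ∈ s, f k) = 0 := by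
  refine Finset.prod_induction f (fun a => x • d a = 0) (fun a b ha hb => ?_) (by simp) h
  rw [leibniz, smul_add, smul_comm x a, smul_comm x b, ha, hb, smul_zero, smul_zero, add_zero]

/-- In characteristic two the cross terms `2 • d a • d b` of `d (d (a * b))` vanish. -/
def sqOfTwoEqZero (h2 : (2 : A) = 0) (d : Derivation R A A) : Derivation R A A where
  toLinearMap := d.toLinearMap ∘ₗ d.toLinearMap
  map_one_eq_zero' := by simp
  leibniz' a b := by
    simp only [LinearMap.coe_comp, Function.comp_apply, coeFn_coe, leibniz, map_add, smul_eq_mul]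
    linear_combination (d a * d b) * h2

theorem sqOfTwoEqZero_apply (h2 : (2 : A) = 0) (d : Derivation R A A) (a : A) :
    sqOfTwoEqZero h2 d a = d (d a) :=
  rfl

end Derivation

section TruncatedPolynomial

variable {F : Type*} [Field F] {p n : ℕ}

theorem xv_pow_self (i : Fin n) : xv F p n i ^ p = 0 := by
  rw [xv, ← map_pow, Ideal.Quotient.eq_zero_iff_mem]
  exact Ideal.subset_span ⟨i, rfl⟩

theorem adjoin_range_xv : Algebra.adjoin F (Set.range (xv F p n)) = ⊤ := by
  have hxv : Set.range (xv F p n) = Ideal.Quotient.mkₐ F (truncIdeal F p n) '' Set.range X := by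
    rw [← Set.range_comp]; rfl
  rw [hxv, ← AlgHom.map_adjoin, adjoin_range_X, Algebra.map_top, AlgHom.range_eq_top]
  exact Ideal.Quotient.mkₐ_surjective F _

theorem derivation_ext_xv {M : Type*} [AddCommGroup M] [Module (TP F p n) M] [Module F M]
    [IsScalarTower F (TP F p n) M] {d₁ d₂ : Derivation F (TP F p n) M}
    (h : ∀ i, d₁ (xv F p n i) = d₂ (xv F p n i)) : d₁ = d₂ :=
  Derivation.ext_of_adjoin_eq_top _ adjoin_range_xv (by rintro _ ⟨i, rfl⟩; exact h i)

theorem scrD_apply_xv {D : Fin n → Wn F p n} (hD : IsCoordDer F p n D) (i j : Fin n) :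
    scrD F p n D i (xv F p n j) =
      if i ≤ j then ∏ k ∈ Finset.Ico i j, xv F p n k ^ (p - 1) else 0 := by
  rw [scrD, Derivation.finset_sum_apply, Finset.sum_eq_single j]
  · split_ifs
    · rw [Derivation.smul_apply, hD, if_pos rfl, smul_eq_mul, mul_one, ← Finset.prod_filter,
        Finset.filter_le_lt_eq_Ico]
    · rfl
  · intro k _ hkj
    split_ifs
    · rw [Derivation.smul_apply, hD, if_neg hkj, smul_zero]
    · rfl
  · simp

end TruncatedPolynomial

section CharTwo

variable {F : Type*} [Field F] {n : ℕ} {D : Fin n → Wn F 2 n}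

theorem scrD_two_apply_xv (hD : IsCoordDer F 2 n D) (i j : Fin n) :
    scrD F 2 n D i (xv F 2 n j) = if i ≤ j then ∏ k ∈ Finset.Ico i j, xv F 2 n k else 0 := by
  simp [scrD_apply_xv hD]

theorem scrD_two_apply_prod_Ico (hD : IsCoordDer F 2 n D) {i j : Fin n} (hij : i < j) :
    scrD F 2 n D i (∏ k ∈ Finset.Ico i j, xv F 2 n k) = ∏ k ∈ Finset.Ioo i j, xv F 2 n k := by
  have hxi : scrD F 2 n D i (xv F 2 n i) = 1 := by simp [scrD_two_apply_xv hD]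
  have hkill : xv F 2 n i • scrD F 2 n D i (∏ k ∈ Finset.Ioo i j, xv F 2 n k) = 0 := by
    refine Derivation.smul_map_prod_eq_zero _ _ _ _ fun k hk => ?_
    have hik : i < k := (Finset.mem_Ioo.mp hk).1
    rw [scrD_two_apply_xv hD, if_pos hik.le, ← Finset.Ioo_insert_left hik,
      Finset.prod_insert Finset.left_notMem_Ioo, smul_eq_mul, ← mul_assoc, ← sq, xv_pow_self,
      zero_mul]
  rw [← Finset.Ioo_insert_left hij, Finset.prod_insert Finset.left_notMem_Ioo,
    Derivation.leibniz, hkill, hxi, smul_eq_mul, mul_one, zero_add]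

theorem scrD_two_sq_apply_xv (hD : IsCoordDer F 2 n D) (i j : Fin n) :
    scrD F 2 n D i (scrD F 2 n D i (xv F 2 n j)) =
      if i < j then ∏ k ∈ Finset.Ioo i j, xv F 2 n k else 0 := by
  rw [scrD_two_apply_xv hD]
  rcases lt_trichotomy i j with hij | rfl | hji
  · rw [if_pos hij.le, if_pos hij, scrD_two_apply_prod_Ico hD hij]
  · simp
  · rw [if_neg hji.not_ge, if_neg hji.asymm, map_zero]

theorem scrD_two_sq_eq_scrD_succ (h2 : (2 : TP F 2 n) = 0) (hD : IsCoordDer F 2 n D)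
    (i : Fin n) (h : i.val + 1 < n) :
    (scrD F 2 n D i).sqOfTwoEqZero h2 = scrD F 2 n D ⟨i.val + 1, h⟩ := by
  refine derivation_ext_xv fun j => ?_
  have hle : (⟨i.val + 1, h⟩ : Fin n) ≤ j ↔ i < j := by
    simp only [Fin.le_def, Fin.lt_def]; omega
  have hIco : Finset.Ico ⟨i.val + 1, h⟩ j = Finset.Ioo i j := by
    ext k; simp only [Finset.mem_Ico, Finset.mem_Ioo, Fin.le_def, Fin.lt_def]; omega
  rw [Derivation.sqOfTwoEqZero_apply, scrD_two_sq_apply_xv hD, scrD_two_apply_xv hD, hIco,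
    if_congr hle rfl rfl]

theorem scrD_two_sq_last_eq_zero (h2 : (2 : TP F 2 n) = 0) (hD : IsCoordDer F 2 n D) (h : 0 < n) :
    (scrD F 2 n D ⟨n - 1, Nat.sub_lt h Nat.one_pos⟩).sqOfTwoEqZero h2 = 0 := by
  refine derivation_ext_xv fun j => ?_
  have hj : ¬ (⟨n - 1, Nat.sub_lt h Nat.one_pos⟩ : Fin n) < j := by
    simp only [Fin.lt_def]; omega
  rw [Derivation.sqOfTwoEqZero_apply, scrD_two_sq_apply_xv hD, if_neg hj, Derivation.zero_apply]

end CharTwo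

/-- For `p = 2`, one has `𝒟ᵢ² = 𝒟ᵢ₊₁` (for `1 ≤ i ≤ n-1`) and `𝒟ₙ² = 0`,
where `𝒟ᵢ = Dᵢ + Σ_{j=i}^{n-1} (Π_{k=i}^{j} x_k^{p-1}) D_{j+1}`. -/
theorem scrD_sq_char_two (F : Type*) [Field F] [CharP F 2] (n : ℕ)
    (D : Fin n → Wn F 2 n) (hD : IsCoordDer F 2 n D) :
    (∀ (i : Fin n) (h : i.val + 1 < n) (a : TP F 2 n),
        scrD F 2 n D i (scrD F 2 n D i a) = scrD F 2 n D ⟨i.val + 1, h⟩ a) ∧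
    (∀ (h : 0 < n) (a : TP F 2 n),
        scrD F 2 n D ⟨n - 1, Nat.sub_lt h Nat.one_pos⟩
          (scrD F 2 n D ⟨n - 1, Nat.sub_lt h Nat.one_pos⟩ a) = 0) := by
  have h2 : (2 : TP F 2 n) = 0 := by
    simpa only [map_ofNat, map_zero] using
      congrArg (algebraMap F (TP F 2 n)) (CharTwo.two_eq_zero (R := F))
  refine ⟨fun i h a => ?_, fun h a => ?_⟩
  · rw [← Derivation.sqOfTwoEqZero_apply h2, scrD_two_sq_eq_scrD_succ h2 hD i h]
  · rw [← Derivation.sqOfTwoEqZero_apply h2, scrD_two_sq_last_eq_zero h2 hD h,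
      Derivation.zero_apply]
end

section
/- Let F be a field of prime characteristic p with |F| ≥ p^n, W_n = Der(F[x₁,...,x_n]/(x₁^p,...,x_n^p)), T = Σ_i F·x_iD_i the canonical torus, and λ = (λ₁,...,λ_n) ∈ F^n a regular vector (λ₁,...,λ_n are linearly independent over the prime field F_p). Then the centralizer in W_n of d_λ = Σ_{i=1}^n λ_i x_i D_i equals T. -/
open MvPolynomial

set_option synthInstance.maxHeartbeats 400000
set_option maxHeartbeats 1000000

/-!
The diagonal derivation `d_λ` acts on the truncated monomial `x^m` (all `m j < p`) by the
weight `∑ m j λ j`, and regularity of `λ` says exactly that distinct exponents have distinct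
weights. A derivation `y` commuting with `d_λ` sends the eigenvector `x_i` to an eigenvector of
the same eigenvalue `λ i`, hence to a multiple `c i • x_i`; as a derivation of `A_n` is determined
by its values on the `x_i`, this gives `y = ∑ c i • x_i D_i ∈ T`. Conversely, any two derivations
that scale every `x_i` commute.
-/

namespace MvPolynomial

variable {σ R : Type*} [CommRing R] (w : σ → R)

theorem mkDerivation_smul_X_monomial (s : σ →₀ ℕ) (r : R) :
    mkDerivation R (fun j => w j • X j) (monomial s r) = Finsupp.weight w s • monomial s r := by
  rw [mkDerivation_monomial, Finsupp.weight_apply, Finsupp.sum, Finsupp.sum, Finset.sum_smul,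
    Finset.smul_sum]
  refine Finset.sum_congr rfl fun i hi => ?_
  have hle : Finsupp.single i 1 ≤ s :=
    Finsupp.single_le_iff.mpr (Nat.one_le_iff_ne_zero.mpr (Finsupp.mem_support_iff.mp hi))
  rw [X, smul_monomial, smul_eq_mul, monomial_mul, tsub_add_cancel_of_le hle, smul_monomial,
    smul_monomial]
  congr 1
  simp only [nsmul_eq_mul, smul_eq_mul]
  ring

theorem coeff_mkDerivation_smul_X (q : MvPolynomial σ R) (m : σ →₀ ℕ) :
    coeff m (mkDerivation R (fun j => w j • X j) q) = Finsupp.weight w m * coeff m q := by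
  classical
  induction q using MvPolynomial.induction_on' with
  | monomial s r =>
    rw [mkDerivation_smul_X_monomial, coeff_smul, coeff_monomial, smul_eq_mul]
    split_ifs with h
    · rw [h]
    · simp
  | add q₁ q₂ h₁ h₂ => rw [map_add, coeff_add, coeff_add, h₁, h₂, mul_add]

end MvPolynomial

section

variable {F : Type*} [Field F] {p n : ℕ}

theorem IsRegularVec.injOn_weight [NeZero p] [CharP F p] {lam : Fin n → F}
    (hreg : IsRegularVec F p n lam) :
    Set.InjOn (Finsupp.weight lam) {m : Fin n →₀ ℕ | ∀ j, m j < p} := by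
  intro m hm m' hm' hmm'
  set μ : Fin n → ZMod p := fun j => (m j : ZMod p) - m' j
  have hμ : ∀ j, ((μ j).val : F) = m j - m' j := fun j => by
    rw [ZMod.natCast_val, ZMod.cast_sub', ZMod.cast_natCast', ZMod.cast_natCast']
  have hμ0 : μ = 0 := hreg μ <| by
    simp only [hμ, sub_mul, Finset.sum_sub_distrib, ← nsmul_eq_mul, ← Finsupp.weight_eq_sum, hmm',
      sub_self]
  ext j
  have hj : (m j : ZMod p) = m' j := sub_eq_zero.mp (congrFun hμ0 j)
  rwa [ZMod.natCast_eq_natCast_iff', Nat.mod_eq_of_lt (hm j), Nat.mod_eq_of_lt (hm' j)] at hj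

theorem monomial_mem_truncIdeal {m : Fin n →₀ ℕ} (c : F) {j : Fin n} (hj : p ≤ m j) :
    monomial m c ∈ truncIdeal F p n := by
  have hle : Finsupp.single j p ≤ m := Finsupp.single_le_iff.mpr hj
  rw [← tsub_add_cancel_of_le hle, ← mul_one c, ← monomial_mul, ← X_pow_eq_monomial]
  exact Ideal.mul_mem_left _ _ (Ideal.subset_span ⟨j, rfl⟩)

theorem coeff_eq_zero_of_mem_truncIdeal {q : MvPolynomial (Fin n) F}
    (hq : q ∈ truncIdeal F p n) {m : Fin n →₀ ℕ} (hm : ∀ j, m j < p) : coeff m q = 0 := by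
  obtain ⟨c, rfl⟩ := (Ideal.mem_span_range_iff_exists_fun).mp hq
  rw [coeff_sum]
  refine Finset.sum_eq_zero fun j _ => ?_
  rw [X_pow_eq_monomial, coeff_mul_monomial', if_neg]
  exact Finsupp.single_le_iff.not.mpr (not_le.mpr (hm j))

theorem eq_zero_of_mem_restrictSupport_of_mem_truncIdeal {q : MvPolynomial (Fin n) F}
    (hq : q ∈ restrictSupport F {m | ∀ j, m j < p}) (hq' : q ∈ truncIdeal F p n) : q = 0 := by
  ext m
  by_cases hm : ∀ j, m j < p
  · exact coeff_eq_zero_of_mem_truncIdeal hq' hm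
  · exact notMem_support_iff.mp fun h => hm ((mem_restrictSupport_iff F).mp hq h)

theorem exists_mem_restrictSupport_mk_eq (f : TP F p n) :
    ∃ q ∈ restrictSupport F {m | ∀ j, m j < p}, Ideal.Quotient.mk (truncIdeal F p n) q = f := by
  obtain ⟨q, rfl⟩ := Ideal.Quotient.mk_surjective f
  induction q using MvPolynomial.induction_on' with
  | monomial m c =>
    by_cases hm : ∀ j, m j < p
    · exact ⟨monomial m c, (monomial_mem_restrictSupport F).mpr (Or.inl hm), rfl⟩
    · obtain ⟨j, hj⟩ := not_forall.mp hm
      refine ⟨0, zero_mem _, ?_⟩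
      rw [map_zero, eq_comm, Ideal.Quotient.eq_zero_iff_mem]
      exact monomial_mem_truncIdeal c (not_lt.mp hj)
  | add q₁ q₂ h₁ h₂ =>
    obtain ⟨r₁, hr₁, e₁⟩ := h₁
    obtain ⟨r₂, hr₂, e₂⟩ := h₂
    exact ⟨r₁ + r₂, add_mem hr₁ hr₂, by rw [map_add, map_add, e₁, e₂]⟩

theorem Wn.ext_xv {d₁ d₂ : Wn F p n} (h : ∀ i, d₁ (xv F p n i) = d₂ (xv F p n i)) : d₁ = d₂ := by
  have hpull : d₁.compAlgebraMap (MvPolynomial (Fin n) F) =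
      d₂.compAlgebraMap (MvPolynomial (Fin n) F) :=
    MvPolynomial.derivation_ext h
  ext f
  obtain ⟨q, rfl⟩ := Ideal.Quotient.mk_surjective f
  exact congr($hpull q)

theorem Wn.apply_mk_of_apply_xv {d : Wn F p n}
    {δ : Derivation F (MvPolynomial (Fin n) F) (MvPolynomial (Fin n) F)}
    (h : ∀ j, d (xv F p n j) = Ideal.Quotient.mk _ (δ (X j))) (q : MvPolynomial (Fin n) F) :
    d (Ideal.Quotient.mk _ q) = Ideal.Quotient.mk _ (δ q) := by
  have hpull : d.compAlgebraMap (MvPolynomial (Fin n) F) =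
      (Algebra.linearMap (MvPolynomial (Fin n) F) (TP F p n)).compDer δ :=
    MvPolynomial.derivation_ext h
  exact congr($hpull q)

theorem sum_smul_xv_smul_apply_xv {D : Fin n → Wn F p n} (hD : IsCoordDer F p n D)
    (c : Fin n → F) (j : Fin n) :
    (∑ i, c i • (xv F p n i • D i)) (xv F p n j) = c j • xv F p n j := by
  rw [← Derivation.coeFnAddMonoidHom_apply, map_sum, Finset.sum_apply]
  simp [Derivation.coeFnAddMonoidHom_apply, hD _ j]

theorem mem_span_xv_smul_iff {D : Fin n → Wn F p n} (hD : IsCoordDer F p n D) {y : Wn F p n} :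
    y ∈ Submodule.span F (Set.range fun i => xv F p n i • D i) ↔
      ∃ c : Fin n → F, ∀ j, y (xv F p n j) = c j • xv F p n j := by
  rw [Submodule.mem_span_range_iff_exists_fun]
  constructor
  · rintro ⟨c, rfl⟩
    exact ⟨c, sum_smul_xv_smul_apply_xv hD c⟩
  · rintro ⟨c, hc⟩
    exact ⟨c, Wn.ext_xv fun j => by rw [sum_smul_xv_smul_apply_xv hD, hc]⟩

theorem commutator_eq_zero_of_apply_xv_eq_smul {d₁ d₂ : Wn F p n} {c₁ c₂ : Fin n → F}
    (h₁ : ∀ j, d₁ (xv F p n j) = c₁ j • xv F p n j)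
    (h₂ : ∀ j, d₂ (xv F p n j) = c₂ j • xv F p n j) : ⁅d₁, d₂⁆ = 0 :=
  Wn.ext_xv fun j => by
    rw [Derivation.commutator_apply, h₁, h₂, Derivation.map_smul, Derivation.map_smul, h₁, h₂,
      smul_smul, smul_smul, mul_comm, sub_self, Derivation.zero_apply]

theorem exists_eq_smul_xv_of_apply_eq_smul [CharP F p] (hp : 1 < p) {lam : Fin n → F}
    (hreg : IsRegularVec F p n lam) {d : Wn F p n}
    (hd : ∀ j, d (xv F p n j) = lam j • xv F p n j) {f : TP F p n} {i : Fin n}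
    (hf : d f = lam i • f) : ∃ c : F, f = c • xv F p n i := by
  have : NeZero p := ⟨by omega⟩
  have mk_smul (c : F) (r : MvPolynomial (Fin n) F) :
      Ideal.Quotient.mk (truncIdeal F p n) (c • r) = c • Ideal.Quotient.mk _ r :=
    map_smul (Ideal.Quotient.mkₐ F (truncIdeal F p n)) c r
  set E := mkDerivation F fun j => lam j • (X j : MvPolynomial (Fin n) F)
  have hdE : ∀ r, d (Ideal.Quotient.mk _ r) = Ideal.Quotient.mk _ (E r) :=
    Wn.apply_mk_of_apply_xv fun j => by rw [hd, mkDerivation_X, mk_smul]; rfl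
  obtain ⟨q, hq, rfl⟩ := exists_mem_restrictSupport_mk_eq f
  have hsupp_E : ∀ m ∈ (E q).support, m ∈ q.support := fun m hm => by
    rw [mem_support_iff, coeff_mkDerivation_smul_X] at hm
    exact mem_support_iff.mpr (right_ne_zero_of_mul hm)
  have hEq : E q - lam i • q = 0 := by
    refine eq_zero_of_mem_restrictSupport_of_mem_truncIdeal
      (sub_mem (fun m hm => hq (hsupp_E m hm)) (Submodule.smul_mem _ _ hq)) ?_
    rw [← Ideal.Quotient.eq_zero_iff_mem, map_sub, ← hdE, hf, mk_smul, sub_self]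
  have hsupp : ∀ m ∈ q.support, m = Finsupp.single i 1 := by
    intro m hm
    have hcoeff := congr(coeff m $hEq)
    rw [coeff_sub, coeff_mkDerivation_smul_X, coeff_smul, coeff_zero, smul_eq_mul,
      ← sub_mul] at hcoeff
    refine hreg.injOn_weight (hq hm) (fun j => ?_) ?_
    · rw [Finsupp.single_apply]; split_ifs <;> omega
    · rw [Finsupp.weight_single, one_smul]
      exact sub_eq_zero.mp ((mul_eq_zero.mp hcoeff).resolve_right (mem_support_iff.mp hm))
  refine ⟨coeff (Finsupp.single i 1) q, ?_⟩
  conv_lhs => rw [eq_monomial_of_support_subset_singleton hsupp]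
  rw [← C_mul_X_eq_monomial, ← smul_eq_C_mul, mk_smul]
  rfl

end

theorem centralizer_d_lambda_eq_torus_general (F : Type*) [Field F] (p n : ℕ)
    (hp : p.Prime) [CharP F p]
    (D : Fin n → Wn F p n) (hD : IsCoordDer F p n D)
    (lam : Fin n → F) (hreg : IsRegularVec F p n lam) :
    {y : Wn F p n | ⁅∑ i, lam i • (xv F p n i • D i), y⁆ = 0} =
      (Submodule.span F (Set.range fun i => xv F p n i • D i) :
        Submodule F (Wn F p n)) := by
  set d := ∑ i, lam i • (xv F p n i • D i)
  have hd : ∀ j, d (xv F p n j) = lam j • xv F p n j := sum_smul_xv_smul_apply_xv hD lam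
  ext y
  rw [Set.mem_ofPred_eq, SetLike.mem_coe, mem_span_xv_smul_iff hD]
  constructor
  · intro hy
    have hy_eigen (i : Fin n) : d (y (xv F p n i)) = lam i • y (xv F p n i) := by
      have hcomm := congr($hy (xv F p n i))
      rw [Derivation.commutator_apply, Derivation.zero_apply, sub_eq_zero] at hcomm
      rw [hcomm, hd, Derivation.map_smul]
    choose c hc using fun i => exists_eq_smul_xv_of_apply_eq_smul hp.one_lt hreg hd (hy_eigen i)
    exact ⟨c, hc⟩
  · rintro ⟨c, hc⟩
    exact commutator_eq_zero_of_apply_xv_eq_smul hd hc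

/-- For a regular vector `λ ∈ Fⁿ`, the centralizer in `W_n` of
`d_λ = Σ λᵢ xᵢ Dᵢ` equals the canonical torus `T = Σ F·xᵢDᵢ`. -/
theorem centralizer_d_lambda_eq_torus (F : Type*) [Field F] (p n : ℕ)
    (hp : p.Prime) [CharP F p]
    (hcard : (p ^ n : Cardinal) ≤ Cardinal.mk F)
    (D : Fin n → Wn F p n) (hD : IsCoordDer F p n D)
    (lam : Fin n → F) (hreg : IsRegularVec F p n lam) :
    {y : Wn F p n | ⁅∑ i, lam i • (xv F p n i • D i), y⁆ = 0} =
      (Submodule.span F (Set.range fun i => xv F p n i • D i) :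
        Submodule F (Wn F p n)) :=
  centralizer_d_lambda_eq_torus_general F p n hp D hD lam hreg
end

section
/- Let F be a field of characteristic p = 2 and W_n = Der(A_n) with A_n = F[x₁,...,x_n]/(x₁²,...,x_n²), n ≥ 2. Let 𝒟₁ = D₁ + Σ_{j=1}^{n-1} (x₁⋯x_j) D_{j+1}. Then the centralizer of 𝒟₁ in W_n equals the span of 𝒟₁,...,𝒟_n, where 𝒟_i = D_i + Σ_{j=i}^{n-1} (x_i⋯x_j) D_{j+1}. -/
open MvPolynomial

set_option synthInstance.maxHeartbeats 400000
set_option maxHeartbeats 1000000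

/-!
The squarefree monomials `x_S = ∏_{i ∈ S} x_i` form a basis of `A_n`, and `𝒟₁ x_S = x_{S'}` for
`S ≠ ∅`, where `S'` is `S - 1` when `S` is read as the binary number `∑_{i ∈ S} 2^(i-1)`. Since
`S ↦ S'` is injective, the kernel of `𝒟₁` on `A_n` consists of the constants.

The `𝒟_i` pairwise commute, which gives one inclusion. Conversely, let `y` commute with `𝒟₁` and
suppose some `z` in the span of the `𝒟_j` agrees with `y` on `x_1, …, x_{i-1}`. Then
`𝒟₁ ((y - z) x_i) = (y - z) (𝒟₁ x_i) = (y - z) (x_1 ⋯ x_{i-1}) = 0`, so `(y - z) x_i` is a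
constant `c`, and `z + c 𝒟_i` agrees with `y` on `x_1, …, x_i`. A derivation is determined by
its values on the `x_i`, so induction on `i` ends with `y = z`.
-/

theorem Derivation.leibniz_prod {R A M ι : Type*} [CommSemiring R] [CommSemiring A]
    [AddCommMonoid M] [Algebra R A] [Module A M] [Module R M] (d : Derivation R A M)
    [DecidableEq ι] (s : Finset ι) (f : ι → A) :
    d (∏ i ∈ s, f i) = ∑ i ∈ s, (∏ j ∈ s.erase i, f j) • d (f i) := by
  induction s using Finset.induction_on with
  | empty => simp
  | insert a s ha ih =>
    rw [Finset.prod_insert ha, Derivation.leibniz, ih, Finset.sum_insert ha, Finset.erase_insert ha,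
      Finset.smul_sum, add_comm]
    congr 1
    refine Finset.sum_congr rfl fun i hi => ?_
    rw [smul_smul, Finset.erase_insert_of_ne (ne_of_mem_of_not_mem hi ha).symm,
      Finset.prod_insert fun h => ha (Finset.mem_of_mem_erase h)]

theorem Derivation.sum_apply {R A M ι : Type*} [CommSemiring R] [CommSemiring A]
    [AddCommMonoid M] [Algebra R A] [Module A M] [Module R M] (s : Finset ι)
    (d : ι → Derivation R A M) (a : A) : (∑ i ∈ s, d i) a = ∑ i ∈ s, d i a := by
  rw [← Derivation.coeFnAddMonoidHom_apply, map_sum, Finset.sum_apply]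
  rfl

open Finset

noncomputable section

namespace JacobsonWitt

section PredSet

variable {α : Type*} [LinearOrder α] [LocallyFiniteOrderBot α]

-- For `α = Fin n`, this is the predecessor of `S` read as a binary number.
def predSet (S : Finset α) : Finset α :=
  if h : S.Nonempty then Iio (S.min' h) ∪ S.erase (S.min' h) else ∅

theorem mem_predSet_of_lt {S : Finset α} (hS : S.Nonempty) {k : α} (hk : k < S.min' hS) :
    k ∈ predSet S := by
  rw [predSet, dif_pos hS]
  exact mem_union_left _ (mem_Iio.2 hk)

theorem min'_notMem_predSet {S : Finset α} (hS : S.Nonempty) : S.min' hS ∉ predSet S := by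
  rw [predSet, dif_pos hS, mem_union, mem_Iio, mem_erase]
  rintro (h | ⟨h, -⟩)
  · exact lt_irrefl _ h
  · exact h rfl

theorem insert_filter_predSet {S : Finset α} (hS : S.Nonempty) :
    insert (S.min' hS) ((predSet S).filter (S.min' hS < ·)) = S := by
  ext k
  rw [predSet, dif_pos hS, mem_insert, mem_filter, mem_union, mem_Iio, mem_erase]
  constructor
  · rintro (rfl | ⟨(h | ⟨-, hk⟩), h'⟩)
    · exact S.min'_mem hS
    · exact absurd h' (lt_asymm h)
    · exact hk
  · intro hk
    rcases eq_or_ne k (S.min' hS) with rfl | hne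
    · exact Or.inl rfl
    · exact Or.inr ⟨Or.inr ⟨hne, hk⟩, lt_of_le_of_ne (S.min'_le k hk) hne.symm⟩

theorem predSet_injOn : Set.InjOn predSet {S : Finset α | S.Nonempty} := by
  intro S hS T hT h
  have hmin : S.min' hS = T.min' hT := by
    by_contra hne
    rcases lt_or_gt_of_ne hne with hlt | hlt
    · exact min'_notMem_predSet hS (h ▸ mem_predSet_of_lt hT hlt)
    · exact min'_notMem_predSet hT (h ▸ mem_predSet_of_lt hS hlt)
  rw [← insert_filter_predSet hS, ← insert_filter_predSet hT, hmin, h]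

end PredSet

theorem prod_X_eq_monomial {σ R : Type*} [CommSemiring R] (S : Finset σ) :
    (∏ i ∈ S, X i : MvPolynomial σ R) = monomial (∑ i ∈ S, Finsupp.single i 1) 1 := by
  rw [monomial_sum_one]
  rfl

theorem sum_single_one_apply {σ : Type*} [DecidableEq σ] (S : Finset σ) (i : σ) :
    (∑ j ∈ S, Finsupp.single j 1 : σ →₀ ℕ) i = if i ∈ S then 1 else 0 := by
  simp [Finsupp.single_apply]

variable {F : Type*} [Field F] {n : ℕ}

variable (F) in
def xProd (S : Finset (Fin n)) : TP F 2 n :=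
  ∏ i ∈ S, xv F 2 n i

@[simp]
theorem xProd_empty : xProd F (∅ : Finset (Fin n)) = 1 :=
  prod_empty

theorem xv_mul_self (i : Fin n) : xv F 2 n i * xv F 2 n i = 0 := by
  rw [xv, ← map_mul, ← sq, Ideal.Quotient.eq_zero_iff_mem]
  exact Ideal.subset_span ⟨i, rfl⟩

theorem xProd_mul_xProd_of_disjoint {S T : Finset (Fin n)} (h : Disjoint S T) :
    xProd F S * xProd F T = xProd F (S ∪ T) :=
  (prod_union h).symm

theorem xProd_mul_xProd_of_mem {S T : Finset (Fin n)} {i : Fin n} (hS : i ∈ S) (hT : i ∈ T) :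
    xProd F S * xProd F T = 0 := by
  rw [xProd, xProd, ← mul_prod_erase _ _ hS, ← mul_prod_erase _ _ hT, mul_mul_mul_comm,
    xv_mul_self, zero_mul]

theorem mk_prod_X (S : Finset (Fin n)) :
    Ideal.Quotient.mk (truncIdeal F 2 n) (∏ i ∈ S, X i) = xProd F S :=
  map_prod _ _ _

theorem mem_truncIdeal_iff {p : ℕ} (f : MvPolynomial (Fin n) F) :
    f ∈ truncIdeal F p n ↔ ∀ m ∈ f.support, ∃ i, p ≤ m i := by
  have : Set.range (fun i => (X i : MvPolynomial (Fin n) F) ^ p) =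
      (fun s => monomial s 1) '' Set.range fun i => Finsupp.single i p := by
    rw [← Set.range_comp]
    exact congrArg Set.range (funext fun i => X_pow_eq_monomial)
  rw [truncIdeal, this, mem_ideal_span_monomial_image]
  refine forall₂_congr fun m _ => ⟨?_, ?_⟩
  · rintro ⟨_, ⟨i, rfl⟩, hi⟩
    exact ⟨i, by simpa using hi i⟩
  · rintro ⟨i, hi⟩
    refine ⟨_, ⟨i, rfl⟩, fun j => ?_⟩
    rcases eq_or_ne i j with rfl | hij
    · simpa using hi
    · simp [hij]

theorem linearIndependent_xProd : LinearIndependent F (xProd F (n := n)) := by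
  rw [Fintype.linearIndependent_iff]
  intro c hc S
  set f : MvPolynomial (Fin n) F := ∑ T, monomial (∑ i ∈ T, Finsupp.single i 1) (c T)
  have hf : f ∈ truncIdeal F 2 n := by
    rw [← Ideal.Quotient.eq_zero_iff_mem, ← hc, map_sum]
    refine sum_congr rfl fun T _ => ?_
    rw [← mk_prod_X, prod_X_eq_monomial, ← Ideal.Quotient.mkₐ_eq_mk F, ← map_smul,
      smul_monomial, smul_eq_mul, mul_one]
  have hcoeff : f.coeff (∑ i ∈ S, Finsupp.single i 1) = c S := by
    rw [coeff_sum, Fintype.sum_eq_single S fun T hT => ?_, coeff_monomial, if_pos rfl]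
    rw [coeff_monomial, if_neg fun h => hT ?_]
    ext i
    have := congrArg (· i) h
    simp only [sum_single_one_apply] at this
    split_ifs at this <;> tauto
  by_contra hS
  obtain ⟨i, hi⟩ := (mem_truncIdeal_iff f).1 hf _ (mem_support_iff.2 (hcoeff ▸ hS))
  rw [sum_single_one_apply] at hi
  split_ifs at hi <;> omega

theorem span_xProd : Submodule.span F (Set.range (xProd F (n := n))) = ⊤ := by
  refine Submodule.eq_top_iff'.2 fun a => ?_
  obtain ⟨f, rfl⟩ := Ideal.Quotient.mk_surjective a
  induction f using MvPolynomial.induction_on' with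
  | add p q hp hq => rw [map_add]; exact Submodule.add_mem _ hp hq
  | monomial m c =>
    by_cases hm : ∃ i, 2 ≤ m i
    · have : monomial m c ∈ truncIdeal F 2 n := (mem_truncIdeal_iff _).2 fun m' hm' => by
        rwa [Finset.mem_singleton.1 (support_monomial_subset hm')]
      rw [Ideal.Quotient.eq_zero_iff_mem.2 this]
      exact Submodule.zero_mem _
    · push Not at hm
      have hm : m = ∑ i ∈ m.support, Finsupp.single i 1 := by
        ext i
        have := hm i
        rw [sum_single_one_apply]
        split_ifs with h <;> simp only [Finsupp.mem_support_iff, not_not] at h <;> omega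
      rw [show monomial m c = c • monomial m 1 by rw [smul_monomial, smul_eq_mul, mul_one], hm,
        ← prod_X_eq_monomial, ← Ideal.Quotient.mkₐ_eq_mk F,
        map_smul, Ideal.Quotient.mkₐ_eq_mk, mk_prod_X]
      exact Submodule.smul_mem _ _ (Submodule.subset_span ⟨_, rfl⟩)

theorem adjoin_range_xv (p : ℕ) : Algebra.adjoin F (Set.range (xv F p n)) = ⊤ := by
  have : Set.range (xv F p n) = Ideal.Quotient.mkₐ F (truncIdeal F p n) '' Set.range X := by
    rw [← Set.range_comp]
    rfl
  rw [this, ← AlgHom.map_adjoin, adjoin_range_X, Algebra.map_top, AlgHom.range_eq_top]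
  exact Ideal.Quotient.mk_surjective

theorem derivation_ext_xv {p : ℕ} {d₁ d₂ : Wn F p n}
    (h : ∀ j, d₁ (xv F p n j) = d₂ (xv F p n j)) : d₁ = d₂ :=
  Derivation.ext_of_adjoin_eq_top _ (adjoin_range_xv p) (Set.forall_mem_range.2 h)

theorem derivation_apply_xProd_eq_zero {d : Wn F 2 n} {S : Finset (Fin n)}
    (h : ∀ j ∈ S, d (xv F 2 n j) = 0) : d (xProd F S) = 0 := by
  rw [xProd, d.leibniz_prod]
  exact sum_eq_zero fun j hj => by rw [h j hj, smul_zero]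

variable {D : Fin n → Wn F 2 n}

theorem scrD_apply_xv (hD : IsCoordDer F 2 n D) (m j : Fin n) :
    scrD F 2 n D m (xv F 2 n j) = if m ≤ j then xProd F (Ico m j) else 0 := by
  rw [scrD, Derivation.sum_apply, Fintype.sum_eq_single j fun k hk => ?_]
  · split_ifs
    · rw [Derivation.smul_apply, hD, if_pos rfl, smul_eq_mul, mul_one, ← prod_filter, xProd]
      exact prod_congr (by ext; simp) fun _ _ => pow_one _
    · rfl
  · split_ifs
    · rw [Derivation.smul_apply, hD, if_neg hk, smul_zero]
    · rfl

theorem scrD_apply_xProd (hD : IsCoordDer F 2 n D) {m j : Fin n} {S : Finset (Fin n)}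
    (hj : j ∈ S) (hmj : m ≤ j) (hmin : ∀ k ∈ S, m ≤ k → j ≤ k) :
    scrD F 2 n D m (xProd F S) = xProd F (Ico m j ∪ S.erase j) := by
  rw [xProd, Derivation.leibniz_prod, sum_eq_single j (fun k hk hkj => ?_) (absurd hj)]
  · rw [scrD_apply_xv hD, if_pos hmj, smul_eq_mul, ← xProd, xProd_mul_xProd_of_disjoint,
      union_comm]
    refine disjoint_left.2 fun k hk hk' => ?_
    rw [mem_erase] at hk
    rw [mem_Ico] at hk'
    exact (hmin k hk.2 hk'.1).not_gt hk'.2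
  · rw [scrD_apply_xv hD]
    split_ifs with hmk
    · have hjk : j < k := lt_of_le_of_ne (hmin k hk hmk) (Ne.symm hkj)
      rw [smul_eq_mul, ← xProd, xProd_mul_xProd_of_mem (i := j) (mem_erase.2 ⟨hjk.ne, hj⟩)
        (mem_Ico.2 ⟨hmj, hjk⟩)]
    · rw [smul_zero]

theorem scrD_apply_xProd_eq_zero (hD : IsCoordDer F 2 n D) {m : Fin n} {S : Finset (Fin n)}
    (h : ∀ k ∈ S, k < m) : scrD F 2 n D m (xProd F S) = 0 :=
  derivation_apply_xProd_eq_zero fun k hk => by rw [scrD_apply_xv hD, if_neg (h k hk).not_ge]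

theorem scrD_lie_scrD_of_le (hD : IsCoordDer F 2 n D) {m k : Fin n} (hmk : m ≤ k) :
    ⁅scrD F 2 n D m, scrD F 2 n D k⁆ = 0 := by
  refine derivation_ext_xv fun j => ?_
  rw [Derivation.commutator_apply, Derivation.zero_apply, sub_eq_zero, scrD_apply_xv hD k,
    scrD_apply_xv hD m]
  rcases lt_trichotomy j k with hjk | rfl | hkj
  · rw [if_neg hjk.not_ge, map_zero]
    split_ifs
    · exact (scrD_apply_xProd_eq_zero hD fun i hi => (mem_Ico.1 hi).2.trans hjk).symm
    · exact (map_zero _).symm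
  · rw [if_pos le_rfl, if_pos hmk, Ico_self, xProd_empty, Derivation.map_one_eq_zero]
    exact (scrD_apply_xProd_eq_zero hD fun i hi => (mem_Ico.1 hi).2).symm
  · rw [if_pos hkj.le, if_pos (hmk.trans hkj.le),
      scrD_apply_xProd hD (mem_Ico.2 ⟨le_rfl, hkj⟩) hmk fun i hi _ => (mem_Ico.1 hi).1,
      scrD_apply_xProd hD (mem_Ico.2 ⟨hmk, hkj⟩) le_rfl fun i _ hi => hi, Ico_self, empty_union]
    congr 1
    ext i
    simp only [mem_union, mem_Ico, mem_erase, Fin.le_def, Fin.lt_def, ne_eq, Fin.ext_iff]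
      at hmk hkj ⊢
    omega

theorem scrD_lie_scrD (hD : IsCoordDer F 2 n D) (m k : Fin n) :
    ⁅scrD F 2 n D m, scrD F 2 n D k⁆ = 0 := by
  rcases le_total m k with hmk | hkm
  · exact scrD_lie_scrD_of_le hD hmk
  · have := lie_skew (scrD F 2 n D k) (scrD F 2 n D m)
    rwa [scrD_lie_scrD_of_le hD hkm, neg_eq_zero] at this

theorem scrD_zero_apply_xProd (hD : IsCoordDer F 2 n D) (h0 : 0 < n) {S : Finset (Fin n)}
    (hS : S.Nonempty) : scrD F 2 n D ⟨0, h0⟩ (xProd F S) = xProd F (predSet S) := by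
  rw [scrD_apply_xProd hD (S.min'_mem hS) (Nat.zero_le _) fun k hk _ => S.min'_le k hk,
    predSet, dif_pos hS]
  congr 2
  ext k
  simp [Fin.le_def]

theorem exists_algebraMap_eq_of_scrD_zero_apply_eq_zero (hD : IsCoordDer F 2 n D) (h0 : 0 < n)
    {a : TP F 2 n} (ha : scrD F 2 n D ⟨0, h0⟩ a = 0) : ∃ c : F, algebraMap F _ c = a := by
  obtain ⟨c, rfl⟩ := (Submodule.mem_span_range_iff_exists_fun F).1
    (span_xProd (F := F) (n := n) ▸ Submodule.mem_top (x := a))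
  set s : Finset (Finset (Fin n)) := univ.erase ∅
  have hs : (s : Set (Finset (Fin n))) ⊆ {S | S.Nonempty} := fun S hS =>
    nonempty_iff_ne_empty.2 (mem_erase.1 hS).1
  have hindep : LinearIndepOn F (xProd F ∘ predSet) (s : Set (Finset (Fin n))) :=
    (linearIndependent_xProd.linearIndepOn _).comp_of_image (predSet_injOn.mono hs)
  have hc : ∀ S ∈ s, c S = 0 := by
    refine linearIndepOn_finset_iff.1 hindep c ?_
    rw [map_sum, ← sum_erase univ (by rw [xProd_empty, Derivation.map_smul,
      Derivation.map_one_eq_zero, smul_zero])] at ha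
    rw [← ha]
    refine sum_congr rfl fun S hS => ?_
    rw [Derivation.map_smul, scrD_zero_apply_xProd hD h0 (hs hS)]
    rfl
  refine ⟨c ∅, ?_⟩
  rw [Fintype.sum_eq_single ∅ fun S hS => by rw [hc S (mem_erase.2 ⟨hS, mem_univ S⟩),
    zero_smul], xProd_empty, Algebra.algebraMap_eq_smul_one]

theorem exists_sub_smul_scrD_apply_xv_eq_zero (hD : IsCoordDer F 2 n D) (h0 : 0 < n)
    {w : Wn F 2 n} (hw : ⁅scrD F 2 n D ⟨0, h0⟩, w⁆ = 0) {i : Fin n}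
    (hwi : ∀ j < i, w (xv F 2 n j) = 0) :
    ∃ c : F, ∀ j ≤ i, (w - c • scrD F 2 n D i) (xv F 2 n j) = 0 := by
  have hker : scrD F 2 n D ⟨0, h0⟩ (w (xv F 2 n i)) = 0 := by
    have := congrArg (· (xv F 2 n i)) hw
    rw [Derivation.commutator_apply, Derivation.zero_apply, sub_eq_zero] at this
    rw [this, scrD_apply_xv hD, if_pos (show (⟨0, h0⟩ : Fin n) ≤ i from Nat.zero_le _)]
    exact derivation_apply_xProd_eq_zero fun j hj => hwi j (mem_Ico.1 hj).2
  obtain ⟨c, hc⟩ := exists_algebraMap_eq_of_scrD_zero_apply_eq_zero hD h0 hker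
  refine ⟨c, fun j hj => ?_⟩
  rw [Derivation.sub_apply, Derivation.smul_apply, scrD_apply_xv hD]
  rcases hj.lt_or_eq with hj | rfl
  · rw [hwi j hj, if_neg hj.not_ge, smul_zero, sub_zero]
  · rw [if_pos le_rfl, Ico_self, xProd_empty, ← hc, Algebra.algebraMap_eq_smul_one, sub_self]

theorem span_range_scrD_le_ker_ad (hD : IsCoordDer F 2 n D) (h0 : 0 < n) :
    Submodule.span F (Set.range (scrD F 2 n D)) ≤
      LinearMap.ker (LieAlgebra.ad F (Wn F 2 n) (scrD F 2 n D ⟨0, h0⟩)) :=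
  Submodule.span_le.2 <| Set.range_subset_iff.2 fun k => scrD_lie_scrD hD _ k

theorem exists_mem_span_sub_apply_xv_eq_zero (hD : IsCoordDer F 2 n D) (h0 : 0 < n)
    {y : Wn F 2 n}
    (hy : y ∈ LinearMap.ker (LieAlgebra.ad F (Wn F 2 n) (scrD F 2 n D ⟨0, h0⟩))) :
    ∀ i ≤ n, ∃ z ∈ Submodule.span F (Set.range (scrD F 2 n D)),
      ∀ j : Fin n, (j : ℕ) < i → (y - z) (xv F 2 n j) = 0 := by
  intro i
  induction i with
  | zero => exact fun _ => ⟨0, zero_mem _, fun j hj => absurd hj (Nat.not_lt_zero _)⟩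
  | succ i ih =>
    intro hi
    obtain ⟨z, hz, hyz⟩ := ih (Nat.le_of_succ_le hi)
    have hyz' : ⁅scrD F 2 n D ⟨0, h0⟩, y - z⁆ = 0 :=
      LinearMap.mem_ker.1 (sub_mem hy (span_range_scrD_le_ker_ad hD h0 hz))
    obtain ⟨c, hc⟩ := exists_sub_smul_scrD_apply_xv_eq_zero hD h0 hyz' (i := ⟨i, hi⟩)
      fun j hj => hyz j hj
    refine ⟨z + c • scrD F 2 n D ⟨i, hi⟩,
      add_mem hz (Submodule.smul_mem _ _ (Submodule.subset_span ⟨_, rfl⟩)), fun j hj => ?_⟩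
    convert hc j (Nat.lt_succ_iff.1 hj) using 2
    exact (sub_sub y z _).symm

theorem ker_ad_scrD_zero (hD : IsCoordDer F 2 n D) (h0 : 0 < n) :
    LinearMap.ker (LieAlgebra.ad F (Wn F 2 n) (scrD F 2 n D ⟨0, h0⟩)) =
      Submodule.span F (Set.range (scrD F 2 n D)) := by
  refine le_antisymm (fun y hy => ?_) (span_range_scrD_le_ker_ad hD h0)
  obtain ⟨z, hz, hyz⟩ := exists_mem_span_sub_apply_xv_eq_zero hD h0 hy n le_rfl
  have hyz : y = z := sub_eq_zero.1 <| derivation_ext_xv fun j =>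
    (hyz j j.isLt).trans (Derivation.zero_apply _).symm
  rwa [hyz]

end JacobsonWitt

end

theorem centralizer_scrD_one_general (F : Type*) [Field F] (n : ℕ)
    (hn : 2 ≤ n) (D : Fin n → Wn F 2 n) (hD : IsCoordDer F 2 n D) :
    {y : Wn F 2 n | ⁅scrD F 2 n D ⟨0, Nat.lt_of_lt_of_le Nat.zero_lt_two hn⟩, y⁆ = 0} =
      (Submodule.span F (Set.range (scrD F 2 n D)) : Submodule F (Wn F 2 n)) := by
  rw [← JacobsonWitt.ker_ad_scrD_zero hD]
  rfl

/-- For `p = 2` and `n ≥ 2`, the centralizer of `𝒟₁` in `W_n` is the span of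
`𝒟₁, …, 𝒟ₙ`. -/
theorem centralizer_scrD_one (F : Type*) [Field F] [CharP F 2] (n : ℕ)
    (hn : 2 ≤ n) (D : Fin n → Wn F 2 n) (hD : IsCoordDer F 2 n D) :
    {y : Wn F 2 n | ⁅scrD F 2 n D ⟨0, Nat.lt_of_lt_of_le Nat.zero_lt_two hn⟩, y⁆ = 0} =
      (Submodule.span F (Set.range (scrD F 2 n D)) : Submodule F (Wn F 2 n)) :=
  centralizer_scrD_one_general F n hn D hD
end

section
/- Let F be a field of characteristic p > 2, W_n the Jacobson-Witt algebra, ν = (1,...,1), and d_ν^{((p+1)/2)} = Σ_{i=1}^n x_i^{(p+1)/2} D_i. If X = Σ_k X_k ∈ W_n (graded decomposition) satisfies [X, d_ν^{((p+1)/2)}] = 0, then X_k = 0 for all k < (p−1)/2. -/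
open MvPolynomial

set_option synthInstance.maxHeartbeats 400000
set_option maxHeartbeats 1000000

/-!
Write `q = (p + 1) / 2` and `d = Σ xᵢ^q Dᵢ`. A derivation is determined by its values on the
`x_k`, and if `w(x_k)` is represented by a polynomial `G`, then `[w, d](x_k)` is represented by
`q x_k^(q-1) G − Σ xᵢ^q ∂ᵢG`. For `|β| < q` the coefficient of that polynomial at
`β + (q − 1)e_k` is `(q − β_k) G_β`. This exponent is still below `p` in every coordinate, so the
coefficient survives in the truncated ring, and `0 < q − β_k < p` forces `G_β = 0`. Taking for `G`
the sum of homogeneous representatives of the `X_m(x_k)`, its coefficients of degree `m` are those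
of `X_m(x_k)`, so `X_m(x_k) = 0` for `m < q`.
-/

namespace MvPolynomial

variable {R σ : Type*} [CommRing R]

theorem coeff_X_mul_pderiv_self (k : σ) (f : MvPolynomial σ R) (β : σ →₀ ℕ) :
    coeff β (X k * pderiv k f) = β k * coeff β f := by
  induction f using MvPolynomial.induction_on' with
  | monomial s a =>
    classical
    rw [X_mul_pderiv_monomial, coeff_smul, coeff_monomial]
    split_ifs with h
    · subst h; simp [nsmul_eq_mul]
    · simp
  | add f g hf hg => simp only [map_add, mul_add, coeff_add, hf, hg]

theorem coeff_sub_sum_X_pow_mul_pderiv [Fintype σ] {q : ℕ} (k : σ) {β : σ →₀ ℕ}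
    (hβ : ∀ i, β i < q) (f : MvPolynomial σ R) :
    coeff (β + Finsupp.single k (q - 1))
        (q • (X k ^ (q - 1) * f) - ∑ i, X i ^ q * pderiv i f) =
      ((q : R) - β k) * coeff β f := by
  classical
  have hq : q = q - 1 + 1 := by have := hβ k; omega
  have shift : ∀ g : MvPolynomial σ R,
      coeff (β + Finsupp.single k (q - 1)) (X k ^ (q - 1) * g) = coeff β g := fun g => by
    rw [X_pow_eq_monomial, add_comm, coeff_monomial_mul, one_mul]
  have off_diag : ∀ i ≠ k, coeff (β + Finsupp.single k (q - 1)) (X i ^ q * pderiv i f) = 0 := by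
    intro i hik
    rw [X_pow_eq_monomial, coeff_monomial_mul', if_neg]
    rw [Finsupp.single_le_iff]
    simpa [Finsupp.single_apply, hik.symm] using hβ i
  have diag : coeff (β + Finsupp.single k (q - 1)) (X k ^ q * pderiv k f) = β k * coeff β f := by
    rw [hq, pow_succ, mul_assoc, Nat.add_sub_cancel, shift, coeff_X_mul_pderiv_self]
  rw [coeff_sub, coeff_smul, shift, coeff_sum, Finset.sum_eq_single k (fun i _ => off_diag i)
    (by simp), diag, nsmul_eq_mul]
  ring

theorem coeff_sum_of_isHomogeneous {s : Finset ℕ} {g : ℕ → MvPolynomial σ R}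
    (hg : ∀ j, (g j).IsHomogeneous j) {β : σ →₀ ℕ} (hβ : β.degree ∈ s) :
    coeff β (∑ j ∈ s, g j) = coeff β (g β.degree) := by
  rw [coeff_sum, Finset.sum_eq_single_of_mem _ hβ fun j _ hj => (hg j).coeff_eq_zero hj.symm]

end MvPolynomial

namespace TruncatedPolynomial

variable {F : Type*} [Field F] {p n : ℕ}

theorem coeff_eq_zero_of_mem_truncIdeal {f : MvPolynomial (Fin n) F}
    (hf : f ∈ truncIdeal F p n) {β : Fin n →₀ ℕ} (hβ : ∀ i, β i < p) : coeff β f = 0 := by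
  have hspan : truncIdeal F p n =
      Ideal.span ((fun s => monomial s (1 : F)) '' Set.range fun i => Finsupp.single i p) := by
    rw [truncIdeal, ← Set.range_comp]
    simp only [Function.comp_def, X_pow_eq_monomial]
  rw [hspan, mem_ideal_span_monomial_image] at hf
  by_contra hc
  obtain ⟨_, ⟨i, rfl⟩, hle⟩ := hf β (mem_support_iff.2 hc)
  exact (hβ i).not_ge (by simpa using hle i)

theorem coordDer_apply_mk {D : Fin n → Wn F p n} (hD : IsCoordDer F p n D) (i : Fin n)
    (f : MvPolynomial (Fin n) F) :
    D i (Ideal.Quotient.mk _ f) = Ideal.Quotient.mk _ (pderiv i f) := by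
  let δ₁ : Derivation F (MvPolynomial (Fin n) F) (TP F p n) :=
    (D i).compAlgebraMap (MvPolynomial (Fin n) F)
  let δ₂ : Derivation F (MvPolynomial (Fin n) F) (TP F p n) :=
    (Algebra.linearMap (MvPolynomial (Fin n) F) (TP F p n)).compDer (pderiv i)
  have : δ₁ = δ₂ := by
    refine derivation_ext fun j => ?_
    change D i (xv F p n j) = Ideal.Quotient.mk _ (pderiv i (X j))
    rcases eq_or_ne i j with rfl | hij
    · simp [hD i i]
    · simp [hD i j, hij, pderiv_X_of_ne hij.symm]
  exact congrArg (· f) this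

theorem sum_xv_pow_smul_apply_mk {D : Fin n → Wn F p n} (hD : IsCoordDer F p n D) (q : ℕ)
    (f : MvPolynomial (Fin n) F) :
    (∑ i, xv F p n i ^ q • D i) (Ideal.Quotient.mk _ f) =
      Ideal.Quotient.mk _ (∑ i, X i ^ q * pderiv i f) := by
  change Derivation.coeFnAddMonoidHom _ _ = _
  simp only [map_sum, Finset.sum_apply, Derivation.coeFnAddMonoidHom_apply, Derivation.smul_apply,
    smul_eq_mul, coordDer_apply_mk hD, map_mul, map_pow]
  rfl

theorem lie_sum_xv_pow_smul_apply_xv {D : Fin n → Wn F p n} (hD : IsCoordDer F p n D) (q : ℕ)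
    (w : Wn F p n) (k : Fin n) {g : MvPolynomial (Fin n) F}
    (hg : Ideal.Quotient.mk _ g = w (xv F p n k)) :
    ⁅w, ∑ i, xv F p n i ^ q • D i⁆ (xv F p n k) =
      Ideal.Quotient.mk _ (q • (X k ^ (q - 1) * g) - ∑ i, X i ^ q * pderiv i g) := by
  have hd : (∑ i, xv F p n i ^ q • D i) (xv F p n k) = xv F p n k ^ q := by
    rw [xv, sum_xv_pow_smul_apply_mk hD, Finset.sum_eq_single k (fun i _ hik => by
      rw [pderiv_X_of_ne hik.symm, mul_zero]) (by simp), pderiv_X_self, mul_one, map_pow]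
  rw [Derivation.commutator_apply, hd, Derivation.leibniz_pow, ← hg,
    sum_xv_pow_smul_apply_mk hD, map_sub, map_nsmul, map_mul, map_pow]
  rfl

theorem eq_zero_of_apply_xv {w : Wn F p n} (h : ∀ k, w (xv F p n k) = 0) : w = 0 := by
  have hadj : Algebra.adjoin F (Set.range (xv F p n)) = ⊤ := by
    have himg : Set.range (xv F p n) =
        ⇑(Ideal.Quotient.mkₐ F (truncIdeal F p n)) '' Set.range X := by
      rw [← Set.range_comp]; rfl
    rw [himg, ← AlgHom.map_adjoin, MvPolynomial.adjoin_range_X, Algebra.map_top]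
    exact (AlgHom.range_eq_top _).mpr (Ideal.Quotient.mkₐ_surjective F _)
  refine Derivation.ext_of_adjoin_eq_top _ hadj ?_
  rintro x ⟨k, rfl⟩
  simp [h k]

theorem exists_isHomogeneous_mk_eq_apply_xv {D : Fin n → Wn F p n} (hD : IsCoordDer F p n D)
    {m : ℕ} {w : Wn F p n} (hw : w ∈ gradeW F p n D m) (k : Fin n) :
    ∃ g : MvPolynomial (Fin n) F, g.IsHomogeneous m ∧ Ideal.Quotient.mk _ g = w (xv F p n k) := by
  let homog : Submodule F (TP F p n) :=
    (homogeneousSubmodule (Fin n) F m).map (Ideal.Quotient.mkₐ F (truncIdeal F p n)).toLinearMap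
  suffices w (xv F p n k) ∈ homog by simpa [homog] using this
  induction hw using Submodule.span_induction with
  | mem w hw =>
    obtain ⟨α, j, -, hα, rfl⟩ := hw
    rw [Derivation.smul_apply, hD j k, smul_eq_mul]
    split_ifs with hjk
    · refine ⟨∏ l, X l ^ α l, ?_, by simp [xm]⟩
      rw [← hα]
      exact IsHomogeneous.prod _ _ _ fun l _ => isHomogeneous_X_pow l (α l)
    · simp
  | zero => simp
  | add w w' _ _ hw hw' => simpa using add_mem hw hw'
  | smul c w _ hw => simpa using homog.smul_mem c hw

theorem coeff_eq_zero_of_mem_truncIdeal_of_degree_lt [CharP F p] {q : ℕ} (hqp : q < p)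
    (h2q : 2 * q ≤ p + 1) (k : Fin n) {G : MvPolynomial (Fin n) F}
    (hG : q • (X k ^ (q - 1) * G) - ∑ i, X i ^ q * pderiv i G ∈ truncIdeal F p n)
    {β : Fin n →₀ ℕ} (hβ : β.degree < q) : coeff β G = 0 := by
  have hβq : ∀ i, β i < q := fun i => (β.le_degree i).trans_lt hβ
  have hreduced : ∀ i, (β + Finsupp.single k (q - 1)) i < p := fun i =>
    (Finsupp.le_degree i _).trans_lt (by simp only [map_add, Finsupp.degree_single]; omega)
  have h := coeff_eq_zero_of_mem_truncIdeal hG hreduced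
  rw [coeff_sub_sum_X_pow_mul_pderiv k hβq] at h
  refine (mul_eq_zero.1 h).resolve_left ?_
  rw [← Nat.cast_sub (hβq k).le, CharP.cast_eq_zero_iff F p]
  exact Nat.not_dvd_of_pos_of_lt (by have := hβq k; omega) (by omega)

end TruncatedPolynomial

theorem centralizer_d_nu_low_components_vanish_general (F : Type*) [Field F] (p n : ℕ)
    (hp2 : 2 < p) [CharP F p]
    (D : Fin n → Wn F p n) (hD : IsCoordDer F p n D)
    (X : Wn F p n) (Xc : ℕ → Wn F p n)
    (hXc : ∀ m, Xc m ∈ gradeW F p n D m)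
    (hsum : X = ∑ m ∈ Finset.range (n * (p - 1) + 1), Xc m)
    (hcent : ⁅X, ∑ i, (xv F p n i ^ ((p + 1) / 2)) • D i⁆ = 0) :
    ∀ m, m < (p + 1) / 2 → Xc m = 0 := by
  intro m hm
  set q := (p + 1) / 2
  refine TruncatedPolynomial.eq_zero_of_apply_xv fun k => ?_
  choose g hg_hom hg_mk using fun j =>
    TruncatedPolynomial.exists_isHomogeneous_mk_eq_apply_xv hD (hXc j) k
  set N := n * (p - 1) + 1
  have hmN : m < N := by
    have : p - 1 ≤ n * (p - 1) := Nat.le_mul_of_pos_left _ k.pos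
    omega
  have hG : Ideal.Quotient.mk _ (∑ j ∈ Finset.range N, g j) = X (xv F p n k) := by
    rw [map_sum, hsum, ← Derivation.coeFnAddMonoidHom_apply, map_sum, Finset.sum_apply]
    simp only [hg_mk, Derivation.coeFnAddMonoidHom_apply]
  have hmem := Ideal.Quotient.eq_zero_iff_mem.1 <|
    (TruncatedPolynomial.lie_sum_xv_pow_smul_apply_xv hD q X k hG).symm.trans (by rw [hcent]; rfl)
  have hcoeff : ∀ β : Fin n →₀ ℕ, β.degree = m → coeff β (g m) = 0 := fun β hβ => by
    rw [← hβ, ← coeff_sum_of_isHomogeneous hg_hom (hβ ▸ Finset.mem_range.2 hmN)]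
    exact TruncatedPolynomial.coeff_eq_zero_of_mem_truncIdeal_of_degree_lt (by omega) (by omega)
      k hmem (hβ ▸ hm)
  have hgm : g m = 0 := by
    ext β
    by_cases hβ : β.degree = m
    · exact hcoeff β hβ
    · exact (hg_hom m).coeff_eq_zero hβ
  rw [← hg_mk, hgm, map_zero]

/-- For `p > 2`: if `X = Σ X_m` (graded decomposition, `X_m` of degree `m − 1`)
centralizes `d_ν^{((p+1)/2)} = Σ xᵢ^{(p+1)/2} Dᵢ`, then `X_m = 0` for all
`m − 1 < (p − 1)/2`, i.e. for all `m < (p + 1)/2`. -/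
theorem centralizer_d_nu_low_components_vanish (F : Type*) [Field F] (p n : ℕ)
    (hp : p.Prime) (hp2 : 2 < p) [CharP F p]
    (D : Fin n → Wn F p n) (hD : IsCoordDer F p n D)
    (X : Wn F p n) (Xc : ℕ → Wn F p n)
    (hXc : ∀ m, Xc m ∈ gradeW F p n D m)
    (hsum : X = ∑ m ∈ Finset.range (n * (p - 1) + 1), Xc m)
    (hcent : ⁅X, ∑ i, (xv F p n i ^ ((p + 1) / 2)) • D i⁆ = 0) :
    ∀ m, m < (p + 1) / 2 → Xc m = 0 :=
  centralizer_d_nu_low_components_vanish_general F p n hp2 D hD X Xc hXc hsum hcent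
end

section
/- Let F be a field of characteristic 2 and W_n = Der(A_n) with A_n = F[x₁,...,x_n]/(x₁²,...,x_n²), n ≥ 2, with its ℤ-grading. If φ is a derivation of W_n homogeneous of degree t ≤ −2 (so φ vanishes on degrees −1 and 0), then φ((W_n)_{[1]}) = 0; concretely, for all i and distinct indices 1, 2, φ(x₁x₂D_i) = 0. -/
open MvPolynomial

set_option synthInstance.maxHeartbeats 400000
set_option maxHeartbeats 1000000
set_option maxHeartbeats 8000000

noncomputable section MyAux
variable {F : Type*} [Field F] {n : ℕ}

lemma my_one_ne_zero : (1 : TP F 2 n) ≠ 0 := by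
  have h : truncIdeal F 2 n ≠ ⊤ := by
    intro h
    have h1 : (1 : MvPolynomial (Fin n) F) ∈ truncIdeal F 2 n := h ▸ Submodule.mem_top
    have h2 : truncIdeal F 2 n ≤
        RingHom.ker (aeval (R := F) (fun _ : Fin n => (0:F))).toRingHom := by
      rw [truncIdeal, Ideal.span_le]
      rintro _ ⟨i, rfl⟩
      simp [RingHom.mem_ker]
    have h3 := h2 h1
    simp [RingHom.mem_ker] at h3
  have := Ideal.Quotient.nontrivial_iff.mpr h
  exact one_ne_zero

lemma xv_mul_self (i : Fin n) : xv F 2 n i * xv F 2 n i = 0 := by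
  have h : xv F 2 n i * xv F 2 n i = Ideal.Quotient.mk (truncIdeal F 2 n) ((X i)^2) := by
    rw [xv, ← map_mul, sq]
  rw [h, Ideal.Quotient.eq_zero_iff_mem]
  exact Ideal.subset_span ⟨i, rfl⟩

lemma wn_ext {d1 d2 : Wn F 2 n} (h : ∀ i, d1 (xv F 2 n i) = d2 (xv F 2 n i)) : d1 = d2 := by
  apply Derivation.ext_of_adjoin_eq_top (Set.range (xv F 2 n))
  · have h1 : Set.range (xv F 2 n) =
        (Ideal.Quotient.mkₐ F (truncIdeal F 2 n)) '' (Set.range X) := by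
      rw [← Set.range_comp]; rfl
    rw [h1, ← AlgHom.map_adjoin, MvPolynomial.adjoin_range_X, Algebra.map_top,
      (AlgHom.range_eq_top _).2 (Ideal.Quotient.mkₐ_surjective F _)]
  · rintro _ ⟨i, rfl⟩; exact h i

lemma my_bracket (f g : TP F 2 n) (P Q : Wn F 2 n) :
    ⁅f • P, g • Q⁆ = (f * P g) • Q - (g * Q f) • P + (f * g) • ⁅P, Q⁆ := by
  ext h
  simp only [Derivation.commutator_apply, Derivation.smul_apply, Derivation.sub_apply,
    Derivation.add_apply, Derivation.leibniz, smul_eq_mul]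
  ring

lemma tp_zero_smul (d : Wn F 2 n) : (0 : TP F 2 n) • d = 0 := by
  ext v; simp

lemma tp_one_smul (d : Wn F 2 n) : (1 : TP F 2 n) • d = d := by
  ext v; simp

lemma D_bracket_eq_zero (D : Fin n → Wn F 2 n) (hD : IsCoordDer F 2 n D) (i j : Fin n) :
    ⁅D i, D j⁆ = (0 : Wn F 2 n) := by
  have hDv : ∀ i j, D i (xv F 2 n j) = if i = j then (1 : TP F 2 n) else 0 := hD
  apply wn_ext; intro k
  simp only [Derivation.commutator_apply, hDv, Derivation.zero_apply]
  split_ifs <;> simp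

def evalAt (v : TP F 2 n) : Wn F 2 n →ₗ[F] TP F 2 n where
  toFun d := d v
  map_add' _ _ := rfl
  map_smul' _ _ := rfl

@[simp] lemma evalAt_apply (v : TP F 2 n) (d : Wn F 2 n) : evalAt v d = d v := rfl

lemma D_indep (D : Fin n → Wn F 2 n) (hD : IsCoordDer F 2 n D) (c : Fin n → F)
    (h : ∑ j, c j • D j = 0) (m : Fin n) : c m = 0 := by
  have hDv : ∀ i j, D i (xv F 2 n j) = if i = j then (1 : TP F 2 n) else 0 := hD
  have h1 := congrArg (evalAt (F := F) (n := n) (xv F 2 n m)) h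
  rw [map_sum, map_zero] at h1
  simp only [evalAt_apply, Derivation.smul_apply, hDv, smul_ite, smul_zero,
    Finset.sum_ite_eq', Finset.mem_univ, if_true] at h1
  rcases smul_eq_zero.1 h1 with h2 | h2
  · exact h2
  · exact absurd h2 my_one_ne_zero

lemma xm_single (a : Fin n) : xm F 2 n (fun l => if l = a then 1 else 0) = xv F 2 n a := by
  rw [xm, xv]
  congr 1
  simp only [pow_ite, pow_one, pow_zero]
  rw [Finset.prod_ite_eq']
  simp

lemma xm_pair (a b : Fin n) :
    xm F 2 n (fun l => (if l = a then 1 else 0) + (if l = b then 1 else 0)) =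
      xv F 2 n a * xv F 2 n b := by
  rw [xm, xv, xv, ← map_mul]
  congr 1
  simp only [pow_add, pow_ite, pow_one, pow_zero]
  rw [Finset.prod_mul_distrib, Finset.prod_ite_eq', Finset.prod_ite_eq']
  simp

lemma gradeWZ_eq_bot (D : Fin n → Wn F 2 n) (k : ℤ) (hk : k + 1 < 0) :
    gradeWZ F 2 n D k = ⊥ := by
  rw [gradeWZ]
  convert Submodule.span_empty (R := F) (M := Wn F 2 n)
  rw [Set.eq_empty_iff_forall_notMem]
  rintro w ⟨α, j, -, hsum, -⟩
  have h0 : (0:ℤ) ≤ ((∑ l, α l : ℕ) : ℤ) := Int.natCast_nonneg _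
  omega

lemma gradeWZ_neg_one_le (D : Fin n → Wn F 2 n) :
    gradeWZ F 2 n D (-1) ≤ Submodule.span F (Set.range D) := by
  rw [gradeWZ]
  apply Submodule.span_le.2
  rintro w ⟨α, j, -, hsum, rfl⟩
  have h0 : ∑ l, α l = 0 := by
    norm_num at hsum
    exact_mod_cast hsum
  have hα : ∀ l, α l = 0 := by
    intro l
    exact (Finset.sum_eq_zero_iff.1 h0) l (Finset.mem_univ l)
  have hxm : xm F 2 n α = 1 := by
    rw [xm]
    have h2 : ∏ j : Fin n, (X (R := F) j : MvPolynomial (Fin n) F) ^ α j = 1 :=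
      Finset.prod_eq_one fun l _ => by rw [hα l, pow_zero]
    rw [h2, map_one]
  rw [hxm, one_smul]
  exact Submodule.subset_span ⟨j, rfl⟩

lemma mem_grade0 (D : Fin n → Wn F 2 n) (a b : Fin n) :
    xv F 2 n a • D b ∈ gradeWZ F 2 n D 0 := by
  apply Submodule.subset_span
  refine ⟨fun l => if l = a then 1 else 0, b, fun l => by dsimp; split <;> simp, ?_, ?_⟩
  · simp [Finset.sum_ite_eq']
  · rw [xm_single]

lemma mem_grade1 (D : Fin n → Wn F 2 n) (a b i : Fin n) (hab : a ≠ b) :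
    (xv F 2 n a * xv F 2 n b) • D i ∈ gradeWZ F 2 n D 1 := by
  apply Submodule.subset_span
  refine ⟨fun l => (if l = a then 1 else 0) + (if l = b then 1 else 0), i, ?_, ?_,
    by rw [xm_pair]⟩
  · intro l
    dsimp only
    by_cases h1 : l = a
    · subst h1
      rw [if_pos rfl, if_neg hab]
    · rw [if_neg h1]
      by_cases h2 : l = b <;> simp [h2]
  · rw [Finset.sum_add_distrib]
    simp [Finset.sum_ite_eq']

lemma extract_pair {α : Fin n → ℕ} (h1 : ∀ l, α l ≤ 1) (h2 : ∑ l, α l = 2) :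
    ∃ a b : Fin n, a ≠ b ∧ xm F 2 n α = xv F 2 n a * xv F 2 n b := by
  classical
  set s := Finset.univ.filter (fun l => α l = 1) with hs
  have hcard : s.card = 2 := by
    have h3 := Finset.sum_filter_add_sum_filter_not Finset.univ (fun l => α l = 1) α
    have h4 : ∑ l ∈ s, α l = s.card := by
      rw [Finset.card_eq_sum_ones]
      exact Finset.sum_congr rfl fun l hl => by simpa using (Finset.mem_filter.1 hl).2
    have h5 : ∑ l ∈ Finset.univ.filter (fun l => ¬ α l = 1), α l = 0 := by
      apply Finset.sum_eq_zero
      intro l hl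
      have h6 := (Finset.mem_filter.1 hl).2
      have h7 := h1 l
      omega
    rw [h2] at h3
    rw [← hs] at h3
    omega
  obtain ⟨a, b, hab, hs2⟩ := Finset.card_eq_two.1 hcard
  have hα : α = fun l => (if l = a then 1 else 0) + (if l = b then 1 else 0) := by
    funext l
    have hl : α l = 1 ↔ (l = a ∨ l = b) := by
      constructor
      · intro h
        have : l ∈ s := by simp [hs, h]
        rw [hs2] at this
        simpa using this
      · intro h
        have : l ∈ s := by rw [hs2]; simpa using h
        simpa [hs] using this
    by_cases ha : l = a
    · have h8 : α l = 1 := hl.2 (Or.inl ha)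
      have hb : ¬ l = b := fun h => hab (ha.symm.trans h)
      rw [h8, if_pos ha, if_neg hb]
    · by_cases hb : l = b
      · have h8 : α l = 1 := hl.2 (Or.inr hb)
        rw [h8, if_neg ha, if_pos hb]
      · have h8 : ¬ α l = 1 := fun h => by rcases hl.1 h with h' | h' <;> [exact ha h'; exact hb h']
        have h9 := h1 l
        rw [if_neg ha, if_neg hb]
        omega
  refine ⟨a, b, hab, ?_⟩
  rw [hα, xm_pair]

lemma coeff_vanish (D : Fin n → Wn F 2 n) (hD : IsCoordDer F 2 n D)
    (φ : LieDerivation F (Wn F 2 n) (Wn F 2 n))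
    (hφ0 : ∀ u ∈ gradeWZ F 2 n D 0, φ u = 0)
    (a b i : Fin n) (hab : a ≠ b) (hia : i ≠ a)
    (c : Fin n → F) (hc : ∑ j, c j • D j = φ ((xv F 2 n a * xv F 2 n b) • D i))
    (m : Fin n) (hm : m ≠ a) : c m = 0 := by
  have hDv : ∀ i j, D i (xv F 2 n j) = if i = j then (1 : TP F 2 n) else 0 := hD
  have hu : φ (xv F 2 n a • D a) = 0 := hφ0 _ (mem_grade0 D a a)
  have hDab : D a (xv F 2 n a * xv F 2 n b) = xv F 2 n b := by
    rw [Derivation.leibniz, hDv a b, hDv a a, if_neg hab, if_pos rfl, smul_zero, zero_add,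
      smul_eq_mul, mul_one]
  have hbr : ⁅xv F 2 n a • D a, (xv F 2 n a * xv F 2 n b) • D i⁆
      = (xv F 2 n a * xv F 2 n b) • D i := by
    rw [my_bracket, D_bracket_eq_zero D hD, smul_zero, add_zero, hDab,
      hDv i a, if_neg hia, mul_zero, tp_zero_smul, sub_zero ((xv F 2 n a * xv F 2 n b) • D i)]
  have hphiw : φ ((xv F 2 n a * xv F 2 n b) • D i)
      = ⁅xv F 2 n a • D a, φ ((xv F 2 n a * xv F 2 n b) • D i)⁆ := by
    have h := LieDerivation.apply_lie_eq_add φ (xv F 2 n a • D a)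
      ((xv F 2 n a * xv F 2 n b) • D i)
    rw [hbr, hu, zero_lie (L := Wn F 2 n) ((xv F 2 n a * xv F 2 n b) • D i), add_zero] at h
    exact h
  rw [← hc] at hphiw
  have hbr2 : ∀ j, ⁅xv F 2 n a • D a, D j⁆ = (if j = a then (-1 : F) else 0) • D a := by
    intro j
    have h := my_bracket (xv F 2 n a) (1 : TP F 2 n) (D a) (D j)
    rw [tp_one_smul, D_bracket_eq_zero D hD, smul_zero, add_zero, Derivation.map_one_eq_zero,
      mul_zero, tp_zero_smul, zero_sub ((1 * (D j) (xv F 2 n a)) • D a), hDv j a, one_mul] at h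
    rw [h]
    split_ifs with hj
    · rw [tp_one_smul, neg_smul (1 : F) (D a), one_smul]
    · rw [tp_zero_smul, neg_zero (G := Wn F 2 n), zero_smul F (D a)]
  have hRHS : ⁅xv F 2 n a • D a, ∑ j, c j • D j⁆
      = ∑ j, (if j = a then -(c j) else 0) • D j := by
    have hsum := map_sum (LieAlgebra.ad F (Wn F 2 n) (xv F 2 n a • D a))
        (fun j => c j • D j) Finset.univ
    simp only [LieAlgebra.ad_apply] at hsum
    rw [hsum]
    refine Finset.sum_congr rfl fun j _ => ?_
    rw [lie_smul (c j) (xv F 2 n a • D a) (D j), hbr2 j]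
    by_cases h : j = a
    · subst h
      rw [if_pos rfl, if_pos rfl, smul_smul, mul_neg_one]
    · rw [if_neg h, if_neg h, zero_smul, smul_zero, zero_smul]
  have hzero : ∑ j, ((fun j => c j - if j = a then -(c j) else 0) j) • D j = 0 := by
    simp only [show ∀ (x y : F) (z : Wn F 2 n), (x - y) • z = x • z - y • z from fun x y z => sub_smul x y z]
    rw [Finset.sum_sub_distrib (f := fun x => c x • D x) (g := fun x => (if x = a then -c x else 0) • D x), ← hRHS, ← hphiw, sub_self (∑ j, c j • D j)]
  have hfin := D_indep D hD _ hzero m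
  simp only [if_neg hm, sub_zero] at hfin
  exact hfin

end MyAux

/-- For `p = 2` and `n ≥ 2`: every derivation `φ` of `W_n` homogeneous of
degree `t ≤ −2` (hence vanishing in degrees `−1` and `0`) vanishes on
`(W_n)_{[1]}`; concretely, `φ(x₁x₂Dᵢ) = 0` for all `i`. -/
theorem homogeneous_derivation_char_two_vanishes_degree_one (F : Type*)
    [Field F] [CharP F 2] (n : ℕ) (hn : 2 ≤ n)
    (D : Fin n → Wn F 2 n) (hD : IsCoordDer F 2 n D)
    (φ : LieDerivation F (Wn F 2 n) (Wn F 2 n)) (t : ℤ) (ht : t ≤ -2)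
    (hhom : ∀ k : ℤ, ∀ X ∈ gradeWZ F 2 n D k, φ X ∈ gradeWZ F 2 n D (k + t)) :
    (∀ X ∈ gradeWZ F 2 n D 1, φ X = 0) ∧
    (∀ i : Fin n,
      φ ((xv F 2 n ⟨0, Nat.lt_of_lt_of_le Nat.zero_lt_two hn⟩ *
          xv F 2 n ⟨1, hn⟩) • D i) = 0) := by
  classical
  have hDv : ∀ i j, D i (xv F 2 n j) = if i = j then (1 : TP F 2 n) else 0 := hD
  have hφ0 : ∀ u ∈ gradeWZ F 2 n D 0, φ u = 0 := by
    intro u hu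
    have h1 := hhom 0 u hu
    rw [gradeWZ_eq_bot D (0 + t) (by omega)] at h1
    simpa using h1
  have key : ∀ a b i : Fin n, a ≠ b → φ ((xv F 2 n a * xv F 2 n b) • D i) = 0 := by
    by_cases ht2 : t = -2
    · subst ht2
      have repr : ∀ a b i : Fin n, a ≠ b → ∃ c : Fin n → F,
          ∑ j, c j • D j = φ ((xv F 2 n a * xv F 2 n b) • D i) := by
        intro a b i hab
        have h1 := hhom 1 _ (mem_grade1 D a b i hab)
        rw [show (1 + -2 : ℤ) = -1 by norm_num] at h1
        exact (Submodule.mem_span_range_iff_exists_fun F).1 (gradeWZ_neg_one_le D h1)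
      have key2 : ∀ a b : Fin n, a ≠ b → φ ((xv F 2 n a * xv F 2 n b) • D a) = 0 := by
        intro a b hab
        obtain ⟨c, hc⟩ := repr a b a hab
        obtain ⟨c', hc'⟩ := repr a b b hab
        have hcm : ∀ m, m ≠ b → c m = 0 := by
          intro m hm
          refine coeff_vanish D hD φ hφ0 b a a (Ne.symm hab) hab c ?_ m hm
          rw [mul_comm (xv F 2 n b)]
          exact hc
        have hc'm : ∀ m, m ≠ a → c' m = 0 := fun m hm =>
          coeff_vanish D hD φ hφ0 a b b hab (Ne.symm hab) c' hc' m hm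
        have hφw : φ ((xv F 2 n a * xv F 2 n b) • D a) = c b • D b := by
          rw [← hc,
            show (∑ j, c j • D j) = ∑ j, (if j = b then c b else 0) • D j from
              Finset.sum_congr rfl fun j _ => by
                by_cases h : j = b
                · subst h; rw [if_pos rfl]
                · rw [if_neg h, hcm j h]]
          simp [ite_smul, Finset.sum_ite_eq']
        have hφw' : φ ((xv F 2 n a * xv F 2 n b) • D b) = c' a • D a := by
          rw [← hc',
            show (∑ j, c' j • D j) = ∑ j, (if j = a then c' a else 0) • D j from
              Finset.sum_congr rfl fun j _ => by
                by_cases h : j = a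
                · subst h; rw [if_pos rfl]
                · rw [if_neg h, hc'm j h]]
          simp [ite_smul, Finset.sum_ite_eq']
        have hDa : D a (xv F 2 n a * xv F 2 n b) = xv F 2 n b := by
          rw [Derivation.leibniz, hDv a b, hDv a a, if_neg hab, if_pos rfl, smul_zero,
            zero_add, smul_eq_mul, mul_one]
        have hDb : D b (xv F 2 n a * xv F 2 n b) = xv F 2 n a := by
          rw [Derivation.leibniz, hDv b b, hDv b a, if_pos rfl, if_neg (Ne.symm hab),
            smul_zero, add_zero, smul_eq_mul, mul_one]
        have hww' : ⁅(xv F 2 n a * xv F 2 n b) • D a,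
            (xv F 2 n a * xv F 2 n b) • D b⁆ = 0 := by
          rw [my_bracket, D_bracket_eq_zero D hD, smul_zero, add_zero, hDa, hDb]
          have e1 : xv F 2 n a * xv F 2 n b * xv F 2 n a = 0 := by
            rw [mul_comm (xv F 2 n a) (xv F 2 n b), mul_assoc, xv_mul_self, mul_zero]
          have e2 : xv F 2 n a * xv F 2 n b * xv F 2 n b = 0 := by
            rw [mul_assoc, xv_mul_self, mul_zero]
          rw [e1, e2, tp_zero_smul, tp_zero_smul, sub_zero (0 : Wn F 2 n)]
        have hb1 : ⁅D b, (xv F 2 n a * xv F 2 n b) • D b⁆ = xv F 2 n a • D b := by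
          have h := my_bracket (1 : TP F 2 n) (xv F 2 n a * xv F 2 n b) (D b) (D b)
          rw [tp_one_smul, D_bracket_eq_zero D hD, smul_zero, add_zero,
            Derivation.map_one_eq_zero, mul_zero, tp_zero_smul, sub_zero ((1 * (D b) (xv F 2 n a * xv F 2 n b)) • D b), one_mul, hDb] at h
          exact h
        have hb2 : ⁅(xv F 2 n a * xv F 2 n b) • D a, D a⁆ = -(xv F 2 n b • D a) := by
          have h := my_bracket (xv F 2 n a * xv F 2 n b) (1 : TP F 2 n) (D a) (D a)
          rw [tp_one_smul, D_bracket_eq_zero D hD, smul_zero, add_zero,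
            Derivation.map_one_eq_zero, mul_zero, tp_zero_smul, zero_sub ((1 * (D a) (xv F 2 n a * xv F 2 n b)) • D a), one_mul, hDa] at h
          exact h
        have hsum0 : c' a • (-(xv F 2 n b • D a)) + c b • (xv F 2 n a • D b) = 0 := by
          have h0 : φ ⁅(xv F 2 n a * xv F 2 n b) • D a,
              (xv F 2 n a * xv F 2 n b) • D b⁆ = 0 := by
            rw [hww']; exact map_zero φ
          rw [LieDerivation.apply_lie_eq_add, hφw, hφw', smul_lie (c b) (D b) ((xv F 2 n a * xv F 2 n b) • D b),
            lie_smul (c' a) ((xv F 2 n a * xv F 2 n b) • D a) (D a), hb1, hb2] at h0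
          exact h0
        have h1 := congrArg (fun d : Wn F 2 n => d (xv F 2 n b)) hsum0
        simp only [Derivation.add_apply, Derivation.smul_apply, Derivation.neg_apply,
          Derivation.zero_apply, hDv, if_neg hab, eq_self_iff_true, if_true, smul_eq_mul,
          mul_one, mul_zero, smul_zero, neg_zero, add_zero, zero_add] at h1
        have h2 : c b • (1 : TP F 2 n) = 0 := by
          have h3 := congrArg (D a) h1
          rwa [Derivation.map_smul, map_zero, hDv a a, if_pos rfl] at h3
        rcases smul_eq_zero.1 h2 with h3 | h3
        · rw [hφw, h3, zero_smul]
        · exact absurd h3 my_one_ne_zero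
      intro a b i hab
      by_cases hia : i = a
      · subst hia; exact key2 i b hab
      by_cases hib : i = b
      · subst hib
        rw [mul_comm]
        exact key2 i a (Ne.symm hab)
      · obtain ⟨c, hc⟩ := repr a b i hab
        have h1 : ∀ m, m ≠ a → c m = 0 := fun m hm =>
          coeff_vanish D hD φ hφ0 a b i hab hia c hc m hm
        have h2 : ∀ m, m ≠ b → c m = 0 := by
          intro m hm
          refine coeff_vanish D hD φ hφ0 b a i (Ne.symm hab) hib c ?_ m hm
          rw [mul_comm (xv F 2 n b)]
          exact hc
        have hall : ∀ m, c m = 0 := fun m => by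
          by_cases h : m = a
          · exact h2 m (h ▸ hab)
          · exact h1 m h
        rw [← hc]
        exact Finset.sum_eq_zero fun j _ => by rw [hall j, zero_smul]
    · intro a b i hab
      have h1 := hhom 1 _ (mem_grade1 D a b i hab)
      rw [gradeWZ_eq_bot D (1 + t) (by omega)] at h1
      simpa using h1
  refine ⟨?_, fun i => key _ _ i (by simp [Fin.ext_iff])⟩
  intro w hw
  rw [gradeWZ] at hw
  induction hw using Submodule.span_induction with
  | mem w hw =>
      obtain ⟨α, j, hle, hsum, rfl⟩ := hw
      obtain ⟨a, b, hab, hxm⟩ := extract_pair (F := F) (n := n) (α := α) (fun l => by simpa using hle l)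
        (by have := hsum; norm_num at this; exact_mod_cast this)
      rw [hxm]
      exact key a b j hab
  | zero => exact map_zero φ
  | add u v hu hv ihu ihv => rw [map_add, ihu, ihv, add_zero]
  | smul r u hu ihu => rw [map_smul, ihu, smul_zero]
end
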